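/- arXiv:1702.02753 — 4 statements merged into one kernel-verified Lean document; each statement's English description precedes it below -/
import Mathlib

section
/- Let J be a group acting on the right on a set P, G a group, ι : J → G a group homomorphism, and C : P × J → G satisfying the cocycle condition C_p(j·j') = C_p(j) · C_{p·j}(j'). Let u : P → G satisfy u(p·j) = ι(j)⁻¹ · u(p) · C_p(j) for all p ∈ P, j ∈ J, and let γ, η : P → J satisfy γ(p·j) = j⁻¹·γ(p)·j and η(p·j) = j⁻¹·η(p)·j for all p, j. Define the transformed dressing u^γ : P → G by u^γ(p) = ι(γ(p))⁻¹ · u(p) · C_p(γ(p)). Then for every p ∈ P, u^γ(p · η(p)) = ι(η(p))⁻¹ · ι(γ(p))⁻¹ · u(p) · C_p(γ(p)·η(p)). (In particular, successive residual gauge transformations of the dressing field compose as the product γ·η, even though C is not a group morphism.) -/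
/-- Successive residual gauge transformations of a twisted dressing field compose as the
product `γ·η`: if `u(p·j) = ι(j)⁻¹ u(p) C_p(j)` and `γ, η : P → J` are gauge-transformation
equivariant, then `u^γ(p·η(p)) = ι(η(p))⁻¹ ι(γ(p))⁻¹ u(p) C_p(γ(p)·η(p))`. -/
theorem stmt4 {P J G : Type*} [Group J] [Group G]
    (act : P → J → P)
    (h_assoc : ∀ (p : P) (j j' : J), act (act p j) j' = act p (j * j'))
    (h_one : ∀ p : P, act p 1 = p)
    (ι : J →* G)
    (C : P → J → G)
    (hC : ∀ (p : P) (j j' : J), C p (j * j') = C p j * C (act p j) j')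
    (u : P → G)
    (hu : ∀ (p : P) (j : J), u (act p j) = (ι j)⁻¹ * u p * C p j)
    (γ η : P → J)
    (hγ : ∀ (p : P) (j : J), γ (act p j) = j⁻¹ * γ p * j)
    (hη : ∀ (p : P) (j : J), η (act p j) = j⁻¹ * η p * j)
    (uγ : P → G)
    (huγ : ∀ p : P, uγ p = (ι (γ p))⁻¹ * u p * C p (γ p)) :
    ∀ p : P, uγ (act p (η p)) =
      (ι (η p))⁻¹ * ((ι (γ p))⁻¹ * (u p * C p (γ p * η p))) := by
  intro p
  have key : C (act p (η p)) ((η p)⁻¹ * γ p * η p) = (C p (η p))⁻¹ * C p (γ p * η p) := by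
    have h1 : C p (η p * ((η p)⁻¹ * γ p * η p)) = C p (η p) * C (act p (η p)) ((η p)⁻¹ * γ p * η p) := hC _ _ _
    have h2 : η p * ((η p)⁻¹ * γ p * η p) = γ p * η p := by group
    rw [h2] at h1
    rw [h1]; group
  rw [huγ, hγ, hu, key, map_mul, map_mul, map_inv]
  group
end

section
/- Let φ ∈ ℂ² be nonzero, let u ∈ SU(2) satisfy u·(0, ‖φ‖)ᵀ = φ, and let α ∈ ℂ with |α| = 1. Set α̃ = diag(α, α⁻¹). Then ‖α⁻¹·φ‖ = ‖φ‖, the matrix u·α̃ belongs to SU(2), and (u·α̃)·(0, ‖α⁻¹·φ‖)ᵀ = α⁻¹·φ. (Hence the dressing field u transforms as u ↦ u·α̃ under U(1) gauge transformations φ ↦ α⁻¹φ.) -/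
open Matrix

theorem RCLike.mem_unitary_of_norm_eq_one {𝕜 : Type*} [RCLike 𝕜] {z : 𝕜} (hz : ‖z‖ = 1) :
    z ∈ unitary 𝕜 := by
  rw [Unitary.mem_iff_self_mul_star, RCLike.star_def, RCLike.mul_conj, hz]
  norm_num

theorem Matrix.diagonal_mem_unitaryGroup {n α : Type*} [Fintype n] [DecidableEq n]
    [CommRing α] [StarRing α] {d : n → α} (hd : ∀ i, d i ∈ unitary α) :
    diagonal d ∈ unitaryGroup n α := by
  rw [mem_unitaryGroup_iff, star_eq_conjTranspose, diagonal_conjTranspose, diagonal_mul_diagonal]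
  exact diagonal_eq_one.mpr (funext fun i => Unitary.mul_star_self_of_mem (hd i))

theorem Matrix.diagonal_mem_specialUnitaryGroup_of_norm_eq_one {α : ℂ} (hα : ‖α‖ = 1) :
    diagonal ![α, α⁻¹] ∈ specialUnitaryGroup (Fin 2) ℂ := by
  have hα0 : α ≠ 0 := norm_ne_zero_iff.mp (by simp [hα])
  have hα_inv : ‖α⁻¹‖ = 1 := by rw [norm_inv, hα, inv_one]
  refine mem_specialUnitaryGroup_iff.mpr ⟨diagonal_mem_unitaryGroup fun i => ?_, ?_⟩
  · fin_cases i
    · exact RCLike.mem_unitary_of_norm_eq_one hα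
    · exact RCLike.mem_unitary_of_norm_eq_one hα_inv
  · simp [det_diagonal, Fin.prod_univ_two, mul_inv_cancel₀ hα0]

theorem Matrix.diagonal_mulVec_zero_cons {R : Type*} [CommRing R] (a b c : R) :
    diagonal ![a, b] *ᵥ ![0, c] = b • ![0, c] := by
  ext i
  fin_cases i <;> simp [mulVec_diagonal]

theorem stmt10_general (φ ψ : EuclideanSpace ℂ (Fin 2))
    (u : Matrix (Fin 2) (Fin 2) ℂ)
    (hu : u ∈ Matrix.specialUnitaryGroup (Fin 2) ℂ)
    (huφ : Matrix.mulVec u ![0, (‖φ‖ : ℂ)] = φ)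
    (α : ℂ) (hα : ‖α‖ = 1)
    (hψ : ψ = α⁻¹ • φ) :
    ‖ψ‖ = ‖φ‖ ∧
    u * Matrix.diagonal ![α, α⁻¹] ∈ Matrix.specialUnitaryGroup (Fin 2) ℂ ∧
    Matrix.mulVec (u * Matrix.diagonal ![α, α⁻¹]) ![0, (‖ψ‖ : ℂ)] = ψ := by
  have hnorm : ‖ψ‖ = ‖φ‖ := by rw [hψ, norm_smul, norm_inv, hα, inv_one, one_mul]
  refine ⟨hnorm, mul_mem hu (diagonal_mem_specialUnitaryGroup_of_norm_eq_one hα), ?_⟩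
  rw [← mulVec_mulVec, diagonal_mulVec_zero_cons, mulVec_smul, hnorm, huφ, hψ]
  exact (WithLp.ofLp_smul _ _ _).symm

/-- U(1)-gauge transformation of the dressing field: if `u ∈ SU(2)` satisfies
`u · (0, ‖φ‖)ᵀ = φ` and `|α| = 1`, then with `α̃ = diag(α, α⁻¹)` and `ψ = α⁻¹·φ` one has
`‖ψ‖ = ‖φ‖`, `u·α̃ ∈ SU(2)`, and `(u·α̃) · (0, ‖ψ‖)ᵀ = ψ`. -/
theorem stmt10 (φ ψ : EuclideanSpace ℂ (Fin 2)) (hφ : φ ≠ 0)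
    (u : Matrix (Fin 2) (Fin 2) ℂ)
    (hu : u ∈ Matrix.specialUnitaryGroup (Fin 2) ℂ)
    (huφ : Matrix.mulVec u ![0, (‖φ‖ : ℂ)] = φ)
    (α : ℂ) (hα : ‖α‖ = 1)
    (hψ : ψ = α⁻¹ • φ) :
    ‖ψ‖ = ‖φ‖ ∧
    u * Matrix.diagonal ![α, α⁻¹] ∈ Matrix.specialUnitaryGroup (Fin 2) ℂ ∧
    Matrix.mulVec (u * Matrix.diagonal ![α, α⁻¹]) ![0, (‖ψ‖ : ℂ)] = ψ :=
  stmt10_general φ ψ u hu huφ α hα hψ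
end

section
/- Let E be a real normed vector space, g a nonzero real number, x ∈ E, and α : E → ℂ differentiable at x with α(x) ≠ 0. Define α̃ : E → Matrix 2 2 ℂ by α̃(y) = diag(α(y), α(y)⁻¹). Then α̃ is differentiable at x, and for every W ∈ Matrix 2 2 ℂ and every v ∈ E, the dressed matrix W' = α̃(x)⁻¹·W·α̃(x) + (1/g)·α̃(x)⁻¹·(Dα̃(x)(v)) has entries W'₀₀ = W₀₀ + (1/g)·α(x)⁻¹·(Dα(x)(v)), W'₀₁ = α(x)⁻²·W₀₁, W'₁₀ = α(x)²·W₁₀, and W'₁₁ = W₁₁ − (1/g)·α(x)⁻¹·(Dα(x)(v)). (The diagonal component transforms as a U(1) connection while the off-diagonal components W∓ transform tensorially with charges ∓2.) -/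
attribute [local instance] Matrix.normedAddCommGroup Matrix.normedSpace

/-!
The gauge matrix `α̃ = diag(α, α⁻¹)` is diagonal, so conjugating `W` by it multiplies the entry
`W i j` by `α̃ᵢ⁻¹ α̃ⱼ`, which is `1` on the diagonal and `α⁻²`, `α²` off it. Differentiating
entrywise, `Dα̃ = diag(Dα, -α⁻¹ Dα α⁻¹)`, so the inhomogeneous term `α̃⁻¹ Dα̃` is
`diag(α⁻¹ Dα, -α⁻¹ Dα)` and only shifts the diagonal entries.
-/

open Matrix

section MatrixCalculus

variable {𝕜 E F : Type*} [NontriviallyNormedField 𝕜] [NormedAddCommGroup E] [NormedSpace 𝕜 E]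
  [NormedAddCommGroup F] [NormedSpace 𝕜 F] {m n : Type*} [Fintype n]
  {f : E → Matrix m n F} {x : E}

theorem Matrix.differentiableAt_iff :
    DifferentiableAt 𝕜 f x ↔ ∀ i j, DifferentiableAt 𝕜 (fun y => f y i j) x :=
  differentiableAt_pi.trans <| forall_congr' fun _ => differentiableAt_pi

theorem Matrix.fderiv_apply (hf : DifferentiableAt 𝕜 f x) (v : E) (i : m) (j : n) :
    fderiv 𝕜 f x v i j = fderiv 𝕜 (fun y => f y i j) x v := by
  rw [_root_.fderiv_apply (differentiableAt_pi.1 hf i) j, _root_.fderiv_apply hf i]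
  rfl

end MatrixCalculus

theorem Matrix.inv_diagonal_of_ne_zero {K n : Type*} [Field K] [Fintype n] [DecidableEq n]
    {v : n → K} (hv : ∀ i, v i ≠ 0) : (diagonal v)⁻¹ = diagonal v⁻¹ :=
  inv_eq_left_inv <| by rw [diagonal_mul_diagonal, ← diagonal_one]; congr; ext i; simp [hv]

theorem Matrix.inv_diagonal_inv_pair {K : Type*} [Field K] {a : K} (ha : a ≠ 0) :
    (diagonal ![a, a⁻¹])⁻¹ = diagonal ![a⁻¹, a] := by
  rw [inv_diagonal_of_ne_zero (by simp [Fin.forall_fin_two, ha])]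
  simp

section DiagonalGauge

variable {𝕜 E K : Type*} [NontriviallyNormedField 𝕜] [NormedAddCommGroup E] [NormedSpace 𝕜 E]
  [NormedDivisionRing K] [NormedAlgebra 𝕜 K] {α : E → K} {x : E}

theorem hasFDerivAt_inv_comp (hα : DifferentiableAt 𝕜 α x) (hαx : α x ≠ 0) :
    HasFDerivAt (fun y => (α y)⁻¹)
      ((-ContinuousLinearMap.mulLeftRight 𝕜 K (α x)⁻¹ (α x)⁻¹).comp (fderiv 𝕜 α x)) x :=
  (hasFDerivAt_inv' hαx).comp x hα.hasFDerivAt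

theorem differentiableAt_diagonal_inv_pair (hα : DifferentiableAt 𝕜 α x) (hαx : α x ≠ 0) :
    DifferentiableAt 𝕜 (fun y => diagonal ![α y, (α y)⁻¹]) x := by
  rw [Matrix.differentiableAt_iff]
  intro i j
  fin_cases i <;> fin_cases j
  all_goals simp [hα, (hasFDerivAt_inv_comp hα hαx).differentiableAt]

theorem fderiv_diagonal_inv_pair_apply (hα : DifferentiableAt 𝕜 α x) (hαx : α x ≠ 0) (v : E) :
    fderiv 𝕜 (fun y => diagonal ![α y, (α y)⁻¹]) x v =
      diagonal ![fderiv 𝕜 α x v, -((α x)⁻¹ * fderiv 𝕜 α x v * (α x)⁻¹)] := by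
  have hd := differentiableAt_diagonal_inv_pair hα hαx
  ext i j
  rw [Matrix.fderiv_apply hd]
  fin_cases i <;> fin_cases j
  all_goals simp [(hasFDerivAt_inv_comp hα hαx).fderiv]

end DiagonalGauge

theorem stmt11_general {E : Type*} [NormedAddCommGroup E] [NormedSpace ℝ E]
    (g : ℝ) (x : E)
    (α : E → ℂ) (hα : DifferentiableAt ℝ α x) (hαx : α x ≠ 0)
    (αt : E → Matrix (Fin 2) (Fin 2) ℂ)
    (hαt : ∀ y : E, αt y = Matrix.diagonal ![α y, (α y)⁻¹]) :
    DifferentiableAt ℝ αt x ∧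
    ∀ (W : Matrix (Fin 2) (Fin 2) ℂ) (v : E),
      ((αt x)⁻¹ * W * αt x + (1 / g) • ((αt x)⁻¹ * fderiv ℝ αt x v)) 0 0
          = W 0 0 + (1 / g) • ((α x)⁻¹ * fderiv ℝ α x v) ∧
      ((αt x)⁻¹ * W * αt x + (1 / g) • ((αt x)⁻¹ * fderiv ℝ αt x v)) 0 1
          = ((α x) ^ 2)⁻¹ * W 0 1 ∧
      ((αt x)⁻¹ * W * αt x + (1 / g) • ((αt x)⁻¹ * fderiv ℝ αt x v)) 1 0
          = (α x) ^ 2 * W 1 0 ∧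
      ((αt x)⁻¹ * W * αt x + (1 / g) • ((αt x)⁻¹ * fderiv ℝ αt x v)) 1 1
          = W 1 1 - (1 / g) • ((α x)⁻¹ * fderiv ℝ α x v) := by
  obtain rfl : αt = fun y => diagonal ![α y, (α y)⁻¹] := funext hαt
  refine ⟨differentiableAt_diagonal_inv_pair hα hαx, fun W v => ?_⟩
  have hconn : (diagonal ![α x, (α x)⁻¹])⁻¹ * fderiv ℝ (fun y => diagonal ![α y, (α y)⁻¹]) x v =
      diagonal ![(α x)⁻¹ * fderiv ℝ α x v, -((α x)⁻¹ * fderiv ℝ α x v)] := by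
    rw [inv_diagonal_inv_pair hαx, fderiv_diagonal_inv_pair_apply hα hαx, diagonal_mul_diagonal]
    congr
    ext i
    fin_cases i <;> simp [field]
  rw [hconn, inv_diagonal_inv_pair hαx]
  simp only [Matrix.add_apply, Matrix.smul_apply, mul_diagonal, diagonal_mul]
  refine ⟨?_, ?_, ?_, ?_⟩ <;> simp [sub_eq_add_neg] <;> field_simp

/-- Residual U(1) transformation of the dressed SU(2) potential: with
`α̃(y) = diag(α(y), α(y)⁻¹)`, the map `α̃` is differentiable at `x` and the dressed matrix
`W' = α̃(x)⁻¹ W α̃(x) + (1/g) α̃(x)⁻¹ Dα̃(x)(v)` has entries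
`W'₀₀ = W₀₀ + (1/g) α(x)⁻¹ Dα(x)(v)`, `W'₀₁ = α(x)⁻² W₀₁`, `W'₁₀ = α(x)² W₁₀`,
`W'₁₁ = W₁₁ − (1/g) α(x)⁻¹ Dα(x)(v)`. -/
theorem stmt11 {E : Type*} [NormedAddCommGroup E] [NormedSpace ℝ E]
    (g : ℝ) (hg : g ≠ 0) (x : E)
    (α : E → ℂ) (hα : DifferentiableAt ℝ α x) (hαx : α x ≠ 0)
    (αt : E → Matrix (Fin 2) (Fin 2) ℂ)
    (hαt : ∀ y : E, αt y = Matrix.diagonal ![α y, (α y)⁻¹]) :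
    DifferentiableAt ℝ αt x ∧
    ∀ (W : Matrix (Fin 2) (Fin 2) ℂ) (v : E),
      ((αt x)⁻¹ * W * αt x + (1 / g) • ((αt x)⁻¹ * fderiv ℝ αt x v)) 0 0
          = W 0 0 + (1 / g) • ((α x)⁻¹ * fderiv ℝ α x v) ∧
      ((αt x)⁻¹ * W * αt x + (1 / g) • ((αt x)⁻¹ * fderiv ℝ αt x v)) 0 1
          = ((α x) ^ 2)⁻¹ * W 0 1 ∧
      ((αt x)⁻¹ * W * αt x + (1 / g) • ((αt x)⁻¹ * fderiv ℝ αt x v)) 1 0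
          = (α x) ^ 2 * W 1 0 ∧
      ((αt x)⁻¹ * W * αt x + (1 / g) • ((αt x)⁻¹ * fderiv ℝ αt x v)) 1 1
          = W 1 1 - (1 / g) • ((α x)⁻¹ * fderiv ℝ α x v) :=
  stmt11_general g x α hα hαx αt hαt
end

section
/- Let E be a real normed vector space, n a natural number, η ∈ Matrix n n ℝ a fixed matrix, x ∈ E. Let e : E → Matrix n n ℝ be differentiable at x with e(x) invertible, and let A : E → (E →L[ℝ] Matrix n n ℝ) satisfy the η-antisymmetry condition (A(x)(v))ᵀ·η + η·(A(x)(v)) = 0 for all v ∈ E. Define g : E → Matrix n n ℝ by g(y) = e(y)ᵀ·η·e(y), and define Γ(x)(v) = e(x)⁻¹·(A(x)(v))·e(x) + e(x)⁻¹·(De(x)(v)). Then the metricity condition holds at x: Dg(x)(v) = (Γ(x)(v))ᵀ·g(x) + g(x)·(Γ(x)(v)) for all v ∈ E, i.e. ∇g = dg − Γᵀg − gΓ = 0. -/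
attribute [local instance] Matrix.normedAddCommGroup Matrix.normedSpace

open Matrix

/-! Viewing `g = eᵀηe` as the bilinear map `(a, b) ↦ aᵀηb` evaluated at `(e, e)`, the Leibniz rule
gives `dg = eᵀη de + deᵀη e`. On the other side, the factors `e⁻¹` in `Γ` cancel against `g`, so
`Γᵀg + gΓ = eᵀ(Aᵀη + ηA)e + deᵀη e + eᵀη de`, and the first term vanishes by `η`-antisymmetry. -/

section InducedMetric

variable {ι : Type*} [Fintype ι] (η : Matrix ι ι ℝ)

noncomputable def transposeMulMulCLM : Matrix ι ι ℝ →L[ℝ] Matrix ι ι ℝ →L[ℝ] Matrix ι ι ℝ :=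
  (LinearMap.mk₂ ℝ (fun a b => aᵀ * η * b)
    (fun a a' b => by simp only [transpose_add, add_mul])
    (fun c a b => by simp only [transpose_smul, smul_mul_assoc])
    (fun a b b' => by simp only [mul_add])
    (fun c a b => by simp only [mul_smul_comm])).toContinuousBilinearMap

lemma fderiv_transpose_mul_mul {E : Type*} [NormedAddCommGroup E] [NormedSpace ℝ E]
    {e : E → Matrix ι ι ℝ} {x : E} (he : DifferentiableAt ℝ e x) (v : E) :
    fderiv ℝ (fun y => (e y)ᵀ * η * e y) x v
      = (e x)ᵀ * η * fderiv ℝ e x v + (fderiv ℝ e x v)ᵀ * η * e x := by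
  have hB := (transposeMulMulCLM η).hasFDerivAt_of_bilinear he.hasFDerivAt he.hasFDerivAt
  rw [show fderiv ℝ (fun y => (e y)ᵀ * η * e y) x = _ from hB.fderiv]
  rfl

end InducedMetric

lemma metricity_of_transpose_mul_add_mul_eq_zero {ι R : Type*} [Fintype ι] [DecidableEq ι]
    [CommRing R] {η M a : Matrix ι ι R} (hM : Mᵀ * η + η * M = 0) (ha : IsUnit a)
    (D : Matrix ι ι R) :
    (a⁻¹ * M * a + a⁻¹ * D)ᵀ * (aᵀ * η * a) + aᵀ * η * a * (a⁻¹ * M * a + a⁻¹ * D)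
      = aᵀ * η * D + Dᵀ * η * a := by
  have hdet : IsUnit a.det := (isUnit_iff_isUnit_det a).mp ha
  have cancel_left (X : Matrix ι ι R) : (a⁻¹)ᵀ * (aᵀ * X) = X := by
    rw [← Matrix.mul_assoc, ← transpose_mul, mul_nonsing_inv a hdet, transpose_one, Matrix.one_mul]
  have cancel_right (X : Matrix ι ι R) : a * (a⁻¹ * X) = X := by
    rw [← Matrix.mul_assoc, mul_nonsing_inv a hdet, Matrix.one_mul]
  have hMa : aᵀ * (Mᵀ * (η * a)) = -(aᵀ * (η * (M * a))) := by
    refine eq_neg_of_add_eq_zero_left ?_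
    have := congrArg (fun X => aᵀ * X * a) hM
    simpa only [mul_add, add_mul, Matrix.mul_assoc, mul_zero, zero_mul] using this
  simp only [transpose_add, transpose_mul, add_mul, mul_add, Matrix.mul_assoc,
    cancel_left, cancel_right, hMa]
  abel

/-- Metricity: for the metric `g = eᵀηe` induced by the tetrad `e` and the dressed linear
connection `Γ = e⁻¹Ae + e⁻¹de` of an `η`-antisymmetric spin connection `A`, one has
`∇g = dg − Γᵀg − gΓ = 0` at `x`. -/
theorem stmt14 {E : Type*} [NormedAddCommGroup E] [NormedSpace ℝ E]
    (n : ℕ) (η : Matrix (Fin n) (Fin n) ℝ) (x : E)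
    (e : E → Matrix (Fin n) (Fin n) ℝ)
    (he : DifferentiableAt ℝ e x) (hex : IsUnit (e x))
    (A : E → (E →L[ℝ] Matrix (Fin n) (Fin n) ℝ))
    (hA : ∀ v : E, (A x v)ᵀ * η + η * (A x v) = 0)
    (g : E → Matrix (Fin n) (Fin n) ℝ)
    (hg : ∀ y : E, g y = (e y)ᵀ * η * e y)
    (Γ : E → Matrix (Fin n) (Fin n) ℝ)
    (hΓ : ∀ v : E, Γ v = (e x)⁻¹ * (A x v) * e x + (e x)⁻¹ * fderiv ℝ e x v) :
    ∀ v : E, fderiv ℝ g x v = (Γ v)ᵀ * g x + g x * Γ v := by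
  obtain rfl : g = fun y => (e y)ᵀ * η * e y := funext hg
  intro v
  rw [fderiv_transpose_mul_mul η he, hΓ v]
  exact (metricity_of_transpose_mul_add_mul_eq_zero (hA v) hex _).symm
end
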